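/- Let C_1 = ∏_{i=1}^d L_i and C_2 = ∏_{i=1}^d L'_i be products of homogeneous linear forms over ℚ, and let T be the d×d matrix with entries T_{ij} = L_i ∘ˢ L'_j (each entry a linear form). Then C_1 ∘ˢ C_2 = perm(T), the permanent of T computed in the polynomial ring ℚ[x_1,...,x_n]. -/
import Mathlib


open MvPolynomial

/-- The linear form `L = ∑ i, a i * x i`. -/
noncomputable def lin {n : ℕ} (a : Fin n → ℚ) : MvPolynomial (Fin n) ℚ :=
  ∑ i, MvPolynomial.C (a i) * MvPolynomial.X i

/-- `m! = e₁! ⋯ e_r!` for a monomial exponent vector `m`. -/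
def mfact {n : ℕ} (m : Fin n →₀ ℕ) : ℕ := m.prod fun _ e => e.factorial

/-- The scaled Hadamard product `f ∘ˢ g = ∑ m, (m! · [m]f · [m]g) · m`. -/
noncomputable def shad {n : ℕ} (f g : MvPolynomial (Fin n) ℚ) :
    MvPolynomial (Fin n) ℚ :=
  ∑ m ∈ f.support,
    MvPolynomial.monomial m ((mfact m : ℚ) * f.coeff m * g.coeff m)

/-- The permanent of a square matrix over a commutative ring. -/
noncomputable def perm {d : ℕ} {R : Type*} [CommRing R]
    (T : Matrix (Fin d) (Fin d) R) : R :=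
  ∑ σ : Equiv.Perm (Fin d), ∏ i, T i (σ i)

open Finset

/-- The exponent vector of the monomial `∏ i, x_{f i}`. -/
noncomputable def Mexp {n d : ℕ} (f : Fin d → Fin n) : Fin n →₀ ℕ :=
  ∑ i, Finsupp.single (f i) 1

lemma coeff_shad {n : ℕ} (p q : MvPolynomial (Fin n) ℚ) (m : Fin n →₀ ℕ) :
    coeff m (shad p q) = (mfact m : ℚ) * coeff m p * coeff m q := by
  classical
  unfold shad
  rw [coeff_sum]
  simp only [coeff_monomial]
  rw [Finset.sum_ite_eq' p.support m (fun m' => (mfact m' : ℚ) * coeff m' p * coeff m' q)]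
  split_ifs with h
  · rfl
  · rw [MvPolynomial.notMem_support_iff.mp h]; ring

lemma prod_monomial {n : ℕ} {ι : Type*} (s : Finset ι) (u : ι → (Fin n →₀ ℕ)) (c : ι → ℚ) :
    ∏ i ∈ s, MvPolynomial.monomial (u i) (c i)
      = MvPolynomial.monomial (∑ i ∈ s, u i) (∏ i ∈ s, c i) := by
  classical
  induction s using Finset.cons_induction with
  | empty => simp [MvPolynomial.monomial_zero']
  | cons i s hi ih => rw [Finset.prod_cons, ih, monomial_mul, Finset.sum_cons, Finset.prod_cons]

lemma lin_eq {n : ℕ} (c : Fin n → ℚ) :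
    lin c = ∑ k, MvPolynomial.monomial (Finsupp.single k 1) (c k) := by
  unfold lin
  refine Finset.sum_congr rfl fun k _ => ?_
  rw [MvPolynomial.X, MvPolynomial.C_mul_monomial, mul_one]

lemma prod_lin {n d : ℕ} (c : Fin d → Fin n → ℚ) :
    ∏ i, lin (c i) = ∑ f : Fin d → Fin n,
      MvPolynomial.monomial (Mexp f) (∏ i, c i (f i)) := by
  classical
  simp only [lin_eq]
  rw [Finset.prod_univ_sum]
  rw [Fintype.piFinset_univ]
  exact Finset.sum_congr rfl fun f _ => prod_monomial _ _ _

lemma coeff_lin {n : ℕ} (c : Fin n → ℚ) (m : Fin n →₀ ℕ) :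
    coeff m (lin c) = ∑ k, if Finsupp.single k 1 = m then c k else 0 := by
  classical
  rw [lin_eq, coeff_sum]
  simp only [coeff_monomial]

lemma mfact_single {n : ℕ} (k : Fin n) : mfact (Finsupp.single k 1) = 1 := by
  unfold mfact
  rw [Finsupp.prod_single_index] <;> simp

lemma shad_lin {n : ℕ} (u v : Fin n → ℚ) :
    shad (lin u) (lin v) = lin (fun k => u k * v k) := by
  classical
  apply MvPolynomial.ext
  intro m
  rw [coeff_shad, coeff_lin, coeff_lin, coeff_lin]
  by_cases h : ∃ k0, Finsupp.single k0 1 = m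
  · obtain ⟨k0, rfl⟩ := h
    have hiff : ∀ k : Fin n, (Finsupp.single k 1 = Finsupp.single k0 1) ↔ k = k0 := by
      intro k; exact Finsupp.single_left_inj one_ne_zero
    simp only [hiff]
    rw [Finset.sum_ite_eq' univ k0, Finset.sum_ite_eq' univ k0, Finset.sum_ite_eq' univ k0]
    simp [mfact_single]
  · push_neg at h
    have : ∀ (w : Fin n → ℚ), (∑ k, if Finsupp.single k 1 = m then w k else 0) = 0 := by
      intro w; exact Finset.sum_eq_zero fun k _ => by simp [h k]
    rw [this, this, this]; ring

lemma Mexp_apply {n d : ℕ} (f : Fin d → Fin n) (k : Fin n) :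
    Mexp f k = (univ.filter fun i => f i = k).card := by
  classical
  unfold Mexp
  rw [Finsupp.finset_sum_apply]
  simp only [Finsupp.single_apply]
  rw [Finset.card_filter]

lemma mfact_Mexp {n d : ℕ} (f : Fin d → Fin n) :
    mfact (Mexp f) = ∏ k, (Mexp f k).factorial := by
  unfold mfact
  exact Finsupp.prod_fintype _ _ fun k => rfl

lemma Mexp_comp_perm {n d : ℕ} (f : Fin d → Fin n) (σ : Equiv.Perm (Fin d)) :
    Mexp (f ∘ σ) = Mexp f := by
  unfold Mexp
  exact Equiv.sum_comp σ (fun i => Finsupp.single (f i) 1)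

lemma exists_perm_of_Mexp_eq {n d : ℕ} {f g : Fin d → Fin n} (h : Mexp g = Mexp f) :
    ∃ σ : Equiv.Perm (Fin d), f ∘ σ = g := by
  classical
  have hcard : ∀ k, Fintype.card {i // g i = k} = Fintype.card {i // f i = k} := by
    intro k
    rw [Fintype.card_subtype, Fintype.card_subtype, ← Mexp_apply, ← Mexp_apply, h]
  have e : ∀ k, {i // g i = k} ≃ {i // f i = k} := fun k => Fintype.equivOfCardEq (hcard k)
  refine ⟨(Equiv.sigmaFiberEquiv g).symm.trans
    ((Equiv.sigmaCongrRight e).trans (Equiv.sigmaFiberEquiv f)), ?_⟩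
  funext i
  simp only [Function.comp_apply, Equiv.trans_apply, Equiv.sigmaFiberEquiv,
    Equiv.coe_fn_symm_mk, Equiv.sigmaCongrRight_apply, Equiv.coe_fn_mk]
  exact (e (g i) ⟨i, rfl⟩).2

lemma card_perm_fiber {n d : ℕ} (f : Fin d → Fin n) (τ : Equiv.Perm (Fin d)) :
    (univ.filter fun σ : Equiv.Perm (Fin d) => f ∘ σ = f ∘ τ).card = mfact (Mexp f) := by
  classical
  rw [← Fintype.card_subtype]
  have e : {σ : Equiv.Perm (Fin d) // f ∘ σ = f ∘ τ} ≃ {σ : Equiv.Perm (Fin d) // f ∘ σ = f} := by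
    refine Equiv.subtypeEquiv (Equiv.mulRight τ⁻¹) fun σ => ?_
    constructor
    · intro h
      funext i
      have := congrFun h (τ⁻¹ i)
      simpa using this
    · intro h
      funext i
      have := congrFun h (τ i)
      simpa using this
  rw [Fintype.card_congr e, DomMulAct.stabilizer_card, mfact_Mexp]
  refine Finset.prod_congr rfl fun k _ => ?_
  rw [Mexp_apply, Fintype.card_subtype]

lemma sum_perm_eq {n d : ℕ} (f : Fin d → Fin n) (B : (Fin d → Fin n) → ℚ) :
    ∑ σ : Equiv.Perm (Fin d), B (f ∘ σ)
      = (mfact (Mexp f) : ℚ) * ∑ g ∈ univ.filter (fun g => Mexp g = Mexp f), B g := by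
  classical
  rw [Finset.sum_comp B (fun σ : Equiv.Perm (Fin d) => f ∘ σ)]
  have himg : univ.image (fun σ : Equiv.Perm (Fin d) => f ∘ σ)
      = univ.filter (fun g => Mexp g = Mexp f) := by
    ext g
    simp only [Finset.mem_image, Finset.mem_filter, Finset.mem_univ, true_and]
    constructor
    · rintro ⟨σ, rfl⟩; exact Mexp_comp_perm f σ
    · intro h
      obtain ⟨σ, hσ⟩ := exists_perm_of_Mexp_eq h
      exact ⟨σ, hσ⟩
  rw [himg, Finset.mul_sum]
  refine Finset.sum_congr rfl fun g hg => ?_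
  simp only [Finset.mem_filter, Finset.mem_univ, true_and] at hg
  obtain ⟨τ, hτ⟩ := exists_perm_of_Mexp_eq hg
  have hc : (univ.filter (fun σ : Equiv.Perm (Fin d) => f ∘ σ = g)).card = mfact (Mexp f) := by
    rw [← card_perm_fiber f τ]
    congr 1
    apply Finset.filter_congr
    intro x _
    rw [hτ]
  rw [hc, nsmul_eq_mul]

theorem shad_prod_eq_perm {n d : ℕ} (a b : Fin d → Fin n → ℚ)
    (T : Matrix (Fin d) (Fin d) (MvPolynomial (Fin n) ℚ))
    (hT : ∀ i j, T i j = shad (lin (a i)) (lin (b j))) :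
    shad (∏ i, lin (a i)) (∏ i, lin (b i)) = perm T := by
  classical
  apply MvPolynomial.ext
  intro m
  have hP : ∀ c : Fin d → Fin n → ℚ, coeff m (∏ i, lin (c i))
      = ∑ f ∈ univ.filter (fun f : Fin d → Fin n => Mexp f = m), ∏ i, c i (f i) := by
    intro c
    rw [prod_lin, coeff_sum]
    simp only [coeff_monomial]
    rw [Finset.sum_filter]
  have hRHS : coeff m (perm T) = ∑ σ : Equiv.Perm (Fin d),
      ∑ f ∈ univ.filter (fun f : Fin d → Fin n => Mexp f = m),
        ∏ i, (a i (f i) * b (σ i) (f i)) := by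
    unfold perm
    rw [coeff_sum]
    refine Finset.sum_congr rfl fun σ _ => ?_
    have h1 : (∏ i, T i (σ i)) = ∏ i, lin (fun k => a i k * b (σ i) k) :=
      Finset.prod_congr rfl fun i _ => by rw [hT, shad_lin]
    rw [h1, hP (fun i k => a i k * b (σ i) k)]
  rw [coeff_shad, hP a, hP b, hRHS, Finset.sum_comm]
  have key : ∀ f ∈ univ.filter (fun f : Fin d → Fin n => Mexp f = m),
      (∑ σ : Equiv.Perm (Fin d), ∏ i, (a i (f i) * b (σ i) (f i)))
      = (∏ i, a i (f i)) *
        ((mfact m : ℚ) * ∑ g ∈ univ.filter (fun g : Fin d → Fin n => Mexp g = m),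
          ∏ i, b i (g i)) := by
    intro f hf
    simp only [Finset.mem_filter, Finset.mem_univ, true_and] at hf
    have h1 : ∀ σ : Equiv.Perm (Fin d),
        (∏ i, (a i (f i) * b (σ i) (f i)))
          = (∏ i, a i (f i)) * ∏ i, b (σ i) (f i) := fun σ => Finset.prod_mul_distrib
    rw [Finset.sum_congr rfl fun σ _ => h1 σ, ← Finset.mul_sum]
    congr 1
    have h2 : ∀ σ : Equiv.Perm (Fin d),
        (∏ i, b (σ i) (f i)) = ∏ i, b i (f (σ⁻¹ i)) := by
      intro σ
      rw [← Equiv.prod_comp σ (fun j => b j (f (σ⁻¹ j)))]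
      exact Finset.prod_congr rfl fun i _ => by simp
    rw [Finset.sum_congr rfl fun σ _ => h2 σ]
    have h3 : ∑ σ : Equiv.Perm (Fin d), ∏ i, b i (f (σ⁻¹ i))
        = ∑ σ : Equiv.Perm (Fin d), ∏ i, b i (f (σ i)) :=
      Fintype.sum_equiv (Equiv.inv (Equiv.Perm (Fin d))) _ _ (fun σ => rfl)
    have h4 := sum_perm_eq f (fun g => ∏ i, b i (g i))
    simp only [Function.comp_apply] at h4
    rw [h3, h4, hf]
  rw [Finset.sum_congr rfl key, ← Finset.sum_mul]
  ring
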